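/- Let G be a locally compact Hausdorff topological group acting continuously and properly on a locally compact Hausdorff space M, and suppose the orbit space M/G is compact. Consider the stabiliser bundle Stab(M) = {(m, h) ∈ M × G : h • m = m}, equipped with the G-action x • (m, h) = (x • m, x h x⁻¹) for x ∈ G. Then the orbit space Stab(M)/G is compact. -/

import Mathlib

/-!
By properness, the pairs `(m, h)` with `h • m = m` and `m` in a compact set `K` form a
compact set: it is closed and lies in `K × {g | g • K ∩ K ≠ ∅}`. Cocompactness gives a
compact `K` meeting every orbit, and conjugating by the element moving `m` into `K` shows
that the pairs over `K` meet every orbit of the stabiliser bundle, so their compact image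
is the whole quotient.
-/

open Set Function

theorem IsOpenMap.exists_isCompact_image_eq_univ {X Y : Type*} [TopologicalSpace X]
    [TopologicalSpace Y] [WeaklyLocallyCompactSpace X] [CompactSpace Y] {f : X → Y}
    (hf : IsOpenMap f) (hsurj : Surjective f) :
    ∃ K : Set X, IsCompact K ∧ f '' K = univ := by
  choose K hKc hKn using fun x : X => exists_compact_mem_nhds x
  obtain ⟨t, ht⟩ := CompactSpace.elim_nhds_subcover (fun y => f '' K (surjInv hsurj y))
    fun y => by simpa only [surjInv_eq] using hf.image_mem_nhds (hKn (surjInv hsurj y))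
  exact ⟨⋃ y ∈ t, K (surjInv hsurj y), t.isCompact_biUnion fun y _ => hKc _,
    by rw [image_iUnion₂, ht, top_eq_univ]⟩

theorem MulAction.exists_isCompact_forall_exists_smul_mem {G M : Type*} [Group G]
    [TopologicalSpace M] [WeaklyLocallyCompactSpace M] [MulAction G M] [ContinuousConstSMul G M]
    [CompactSpace (Quotient (orbitRel G M))] :
    ∃ K : Set M, IsCompact K ∧ ∀ m : M, ∃ x : G, x • m ∈ K := by
  obtain ⟨K, hK, hKsurj⟩ :=
    (isOpenMap_quotient_mk'_mul (Γ := G) (T := M)).exists_isCompact_image_eq_univ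
      Quotient.mk_surjective
  refine ⟨K, hK, fun m => ?_⟩
  obtain ⟨m', hm'K, hm'⟩ := hKsurj.ge (mem_univ (Quotient.mk (orbitRel G M) m))
  obtain ⟨x, rfl⟩ := Quotient.exact hm'
  exact ⟨x, hm'K⟩

theorem ProperSMul.isCompact_setOf_smul_eq_self_and_fst_mem {G X : Type*} [Group G]
    [TopologicalSpace G] [TopologicalSpace X] [T2Space X] [MulAction G X] [ProperSMul G X]
    {K : Set X} (hK : IsCompact K) :
    IsCompact {p : X × G | p.2 • p.1 = p.1 ∧ p.1 ∈ K} := by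
  refine (hK.prod (isCompact_setOfPred_inter_nonempty (G := G) hK hK)).of_isClosed_subset
    ((isClosed_eq (by fun_prop) continuous_fst).inter (hK.isClosed.preimage continuous_fst))
    fun p ⟨hfix, hmem⟩ => ⟨hmem, p.1, ⟨p.1, hmem, hfix⟩, hmem⟩

theorem ProperSMul.isCompact_stabiliserBundle_fst_mem {G X : Type*} [Group G]
    [TopologicalSpace G] [TopologicalSpace X] [T2Space X] [MulAction G X] [ProperSMul G X]
    {K : Set X} (hK : IsCompact K) :
    IsCompact {p : {p : X × G // p.2 • p.1 = p.1} | p.1.1 ∈ K} := by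
  have hsub : {p : X × G | p.2 • p.1 = p.1 ∧ p.1 ∈ K} ⊆ range Subtype.val :=
    fun p hp => ⟨⟨p, hp.1⟩, rfl⟩
  have hpre : {p : {p : X × G // p.2 • p.1 = p.1} | p.1.1 ∈ K} =
      Subtype.val ⁻¹' {p : X × G | p.2 • p.1 = p.1 ∧ p.1 ∈ K} := by
    ext p
    exact (and_iff_right p.2).symm
  rw [hpre]
  exact (Topology.IsInducing.subtypeVal.isCompact_preimage_iff hsub).mpr
    (isCompact_setOf_smul_eq_self_and_fst_mem hK)

theorem stabiliser_bundle_quotient_compact_general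
    {G M : Type*} [Group G] [TopologicalSpace G]
    [TopologicalSpace M] [LocallyCompactSpace M] [T2Space M]
    [MulAction G M]
    (hproper : IsProperMap (fun p : G × M => (p.1 • p.2, p.2)))
    (hcocompact : CompactSpace (Quotient (MulAction.orbitRel G M))) :
    CompactSpace (Quot (fun p q : {p : M × G // p.2 • p.1 = p.1} =>
      ∃ x : G, x • (p : M × G).1 = (q : M × G).1 ∧
        x * (p : M × G).2 * x⁻¹ = (q : M × G).2)) := by
  have : ProperSMul G M := ⟨hproper⟩
  obtain ⟨K, hK, hKorbits⟩ :=
    MulAction.exists_isCompact_forall_exists_smul_mem (G := G) (M := M)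
  rw [← isCompact_univ_iff]
  convert (ProperSMul.isCompact_stabiliserBundle_fst_mem (G := G) hK).image continuous_quot_mk
  refine (eq_univ_of_forall fun q => ?_).symm
  obtain ⟨⟨⟨m, h⟩, hfix⟩, rfl⟩ := Quot.exists_rep q
  obtain ⟨x, hxK⟩ := hKorbits m
  have hconj : (x * h * x⁻¹) • x • m = x • m := by simp [mul_smul, hfix]
  exact ⟨⟨(x • m, x * h * x⁻¹), hconj⟩, hxK, (Quot.sound ⟨x, rfl, rfl⟩).symm⟩

/-- For a continuous proper action of a locally compact Hausdorff group `G`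
on a locally compact Hausdorff space `M` with compact orbit space `M/G`, the stabiliser
bundle `Stab(M) = {(m, h) ∈ M × G | h • m = m}`, with the `G`-action
`x • (m, h) = (x • m, x h x⁻¹)`, has compact orbit space `Stab(M)/G`. -/
theorem stabiliser_bundle_quotient_compact
    {G M : Type*} [Group G] [TopologicalSpace G] [IsTopologicalGroup G]
    [LocallyCompactSpace G] [T2Space G]
    [TopologicalSpace M] [LocallyCompactSpace M] [T2Space M]
    [MulAction G M] [ContinuousSMul G M]
    (hproper : IsProperMap (fun p : G × M => (p.1 • p.2, p.2)))
    (hcocompact : CompactSpace (Quotient (MulAction.orbitRel G M))) :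
    CompactSpace (Quot (fun p q : {p : M × G // p.2 • p.1 = p.1} =>
      ∃ x : G, x • (p : M × G).1 = (q : M × G).1 ∧
        x * (p : M × G).2 * x⁻¹ = (q : M × G).2)) :=
  stabiliser_bundle_quotient_compact_general hproper hcocompact
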